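/- Let A, B, C > 0. Suppose u : (0,δ) → ℝ satisfies u(z) = −(ACB/(2(A + B)²))z² + O(z³) as z → 0⁺, and define v²(z) = (4u(z)³ + 3Au(z)²z + 2u(z)z(A + B) + ACz³)/(4u(z) + Az). Then v²(z) = (CA/(A + B))z² + O(z³), and (1 + u(z))² + v²(z) = 1 + (CA²/(A + B)²)z² + O(z³) as z → 0⁺. In particular there exists δ₄ > 0 such that (1 + u(z))² + v²(z) > 1 for 0 < z < δ₄. -/

import Mathlib

open Filter Asymptotics Topology

/-!
Since `u = O(z²)`, subtracting `C A z² / (A + B)` times the denominator `4u + A z` from the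
numerator of `v²` cancels everything up to order `z³`, and the `z³` terms cancel exactly because of
the value of the `z²` coefficient of `u`. What remains is `O(z⁴)`, while the denominator is
asymptotic to `A z`, so `v² = C A z² / (A + B) + O(z³)`. Then `(1 + u)² + v² - 1 = 2u + u² + v²`,
whose `z²` coefficients add up to `C A² / (A + B)² > 0`, which dominates the `O(z³)` error.
-/

/-- `v₂(z)²` as a function of `x = u₂(z)` and `z`. -/
noncomputable def vSq (A B C x z : ℝ) : ℝ :=
  (4 * x ^ 3 + 3 * A * x ^ 2 * z + 2 * x * z * (A + B) + A * C * z ^ 3) / (4 * x + A * z)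

section

variable {l : Filter ℝ} {u : ℝ → ℝ} {A B C : ℝ}

lemma isBigO_pow_pow_of_le (hl : l ≤ 𝓝 0) {m n : ℕ} (h : m ≤ n) :
    (fun z : ℝ => z ^ n) =O[l] fun z => z ^ m := by
  rcases h.eq_or_lt with rfl | h
  · exact isBigO_refl _ _
  · exact (isLittleO_pow_pow h).isBigO.mono hl

lemma Asymptotics.IsBigO.pow_mul_pow {m : ℕ} (hu : u =O[l] fun z => z ^ m) (i j : ℕ) :
    (fun z => u z ^ i * z ^ j) =O[l] fun z => z ^ (m * i + j) :=
  ((hu.pow i).mul (isBigO_refl (fun z => z ^ j) l)).congr_right fun z => by ring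

lemma isBigO_sq_of_sub_isBigO_cube (hl : l ≤ 𝓝 0) {a : ℝ}
    (hu : (fun z => u z - a * z ^ 2) =O[l] fun z => z ^ 3) : u =O[l] fun z => z ^ 2 :=
  (hu.trans (isBigO_pow_pow_of_le hl (by norm_num))).add
    ((isBigO_refl _ _).const_mul_left a) |>.congr_left fun z => by ring

/-- The numerator is written as a sum of monomials `x ^ i * z ^ j` to fit
`Asymptotics.IsBigO.pow_mul_pow`. -/
lemma vSq_sub_eq (hAB : A + B ≠ 0) {x z : ℝ} (hD : 4 * x + A * z ≠ 0) :
    vSq A B C x z - C * A / (A + B) * z ^ 2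
      = (4 * (x ^ 3 * z ^ 0) + 3 * A * (x ^ 2 * z ^ 1) - 4 * (C * A / (A + B)) * (x ^ 1 * z ^ 2)
          + 2 * (A + B) * (z * (x - -(A * C * B / (2 * (A + B) ^ 2)) * z ^ 2)))
        / (4 * x + A * z) := by
  rw [vSq, div_sub' hD]
  congr 1
  field_simp
  ring

lemma vSq_sub_isBigO (hl : l ≤ 𝓝[≠] 0) (hA : A ≠ 0) (hAB : A + B ≠ 0)
    (hu : (fun z => u z - (-(A * C * B / (2 * (A + B) ^ 2)) * z ^ 2)) =O[l] fun z => z ^ 3) :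
    (fun z => vSq A B C (u z) z - C * A / (A + B) * z ^ 2) =O[l] fun z => z ^ 3 := by
  have hl0 : l ≤ 𝓝 0 := hl.trans nhdsWithin_le_nhds
  have hu2 := isBigO_sq_of_sub_isBigO_cube hl0 hu
  have hmonomial {i j : ℕ} (hij : 4 ≤ 2 * i + j) :
      (fun z => u z ^ i * z ^ j) =O[l] fun z => z ^ 4 :=
    (hu2.pow_mul_pow i j).trans (isBigO_pow_pow_of_le hl0 hij)
  have hnum : (fun z => 4 * (u z ^ 3 * z ^ 0) + 3 * A * (u z ^ 2 * z ^ 1)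
      - 4 * (C * A / (A + B)) * (u z ^ 1 * z ^ 2)
      + 2 * (A + B) * (z * (u z - -(A * C * B / (2 * (A + B) ^ 2)) * z ^ 2)))
      =O[l] fun z => z ^ 4 :=
    ((((hmonomial (by norm_num)).const_mul_left _).add
      ((hmonomial (by norm_num)).const_mul_left _)).sub
      ((hmonomial (by norm_num)).const_mul_left _)).add
      ((((isBigO_refl (fun z => z) l).mul hu).congr_right fun z => by ring).const_mul_left _)
  have hden : (fun z => 4 * u z + A * z) ~[l] fun z => A * z :=
    have h := hu2.trans_isLittleO ((isLittleO_pow_pow (by norm_num : 1 < 2)).mono hl0)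
    IsLittleO.isEquivalent <|
      ((h.const_mul_left 4).const_mul_right hA).congr (fun z => by simp) (fun z => by simp)
  have hden_ne : ∀ᶠ z in l, 4 * u z + A * z ≠ 0 := by
    filter_upwards [hden.symm.isBigO.eq_zero_imp, hl self_mem_nhdsWithin] with z h hz
    exact fun h0 => mul_ne_zero hA hz (h h0)
  have hinv : (fun z => (4 * u z + A * z)⁻¹) =O[l] fun z => z⁻¹ :=
    hden.inv.isBigO.trans
      (((isBigO_refl _ _).const_mul_left A⁻¹).congr_left fun z => (mul_inv A z).symm)
  refine (hnum.mul hinv).congr' ?_ ?_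
  · filter_upwards [hden_ne] with z hz
    exact (div_eq_mul_inv _ _).symm.trans (vSq_sub_eq hAB hz).symm
  · exact Eventually.of_forall fun z => by
      rcases eq_or_ne z 0 with rfl | hz
      · simp
      · field_simp

lemma modSq_sub_isBigO (hl : l ≤ 𝓝[≠] 0) (hA : A ≠ 0) (hAB : A + B ≠ 0)
    (hu : (fun z => u z - (-(A * C * B / (2 * (A + B) ^ 2)) * z ^ 2)) =O[l] fun z => z ^ 3) :
    (fun z => (1 + u z) ^ 2 + vSq A B C (u z) z - (1 + C * A ^ 2 / (A + B) ^ 2 * z ^ 2))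
      =O[l] fun z => z ^ 3 := by
  have hl0 : l ≤ 𝓝 0 := hl.trans nhdsWithin_le_nhds
  have hsq : (fun z => u z ^ 2 * z ^ 0) =O[l] fun z => z ^ 3 :=
    ((isBigO_sq_of_sub_isBigO_cube hl0 hu).pow_mul_pow 2 0).trans
      (isBigO_pow_pow_of_le hl0 (by norm_num))
  refine (((hu.const_mul_left 2).add hsq).add (vSq_sub_isBigO hl hA hAB hu)).congr_left fun z => ?_
  field_simp
  ring

end

lemma exists_forall_lt_of_sub_isBigO_cube {f : ℝ → ℝ} {a c : ℝ} (hc : 0 < c)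
    (hf : (fun z => f z - (a + c * z ^ 2)) =O[𝓝[>] 0] fun z => z ^ 3) :
    ∃ δ > 0, ∀ z, 0 < z → z < δ → a < f z := by
  have hcube : (fun z : ℝ => z ^ 3) =o[𝓝[>] 0] fun z => c * z ^ 2 :=
    ((isLittleO_pow_pow (by norm_num)).mono nhdsWithin_le_nhds).const_mul_right hc.ne'
  have hequiv : (fun z => f z - a) ~[𝓝[>] 0] fun z => c * z ^ 2 :=
    IsLittleO.isEquivalent <| (hf.trans_isLittleO hcube).congr_left fun z => by
      simp only [Pi.sub_apply]
      ring
  have hpos : ∀ᶠ z in 𝓝[>] 0, 0 < f z - a :=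
    hequiv.eventually_pos (eventually_mem_nhdsWithin.mono fun z (hz : 0 < z) => by positivity)
  obtain ⟨δ, hδ, h⟩ := (nhdsGT_basis 0).eventually_iff.mp hpos
  exact ⟨δ, hδ, fun z h0 h1 => sub_pos.mp (h ⟨h0, h1⟩)⟩

theorem stmt_15_general (A B C : ℝ) (hA : 0 < A) (hB : 0 < B) (hC : 0 < C)
    (u : ℝ → ℝ)
    (hu : (fun z => u z - (-(A * C * B / (2 * (A + B) ^ 2)) * z ^ 2))
      =O[nhdsWithin 0 (Set.Ioi 0)] fun z => z ^ 3) :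
    (((fun z => (4 * u z ^ 3 + 3 * A * u z ^ 2 * z + 2 * u z * z * (A + B) + A * C * z ^ 3)
          / (4 * u z + A * z) - C * A / (A + B) * z ^ 2)
        =O[nhdsWithin 0 (Set.Ioi 0)] fun z => z ^ 3)
      ∧ ((fun z => (1 + u z) ^ 2
            + (4 * u z ^ 3 + 3 * A * u z ^ 2 * z + 2 * u z * z * (A + B) + A * C * z ^ 3)
              / (4 * u z + A * z)
            - (1 + C * A ^ 2 / (A + B) ^ 2 * z ^ 2))
          =O[nhdsWithin 0 (Set.Ioi 0)] fun z => z ^ 3)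
      ∧ ∃ δ₄ > 0, ∀ z : ℝ, 0 < z → z < δ₄ →
          1 < (1 + u z) ^ 2
            + (4 * u z ^ 3 + 3 * A * u z ^ 2 * z + 2 * u z * z * (A + B) + A * C * z ^ 3)
              / (4 * u z + A * z)) := by
  have hl : 𝓝[>] (0 : ℝ) ≤ 𝓝[≠] 0 := nhdsWithin_mono _ fun z (hz : 0 < z) => hz.ne'
  have hAB : A + B ≠ 0 := by positivity
  have hmod := modSq_sub_isBigO hl hA.ne' hAB hu
  exact ⟨vSq_sub_isBigO hl hA.ne' hAB hu, hmod,
    exists_forall_lt_of_sub_isBigO_cube (by positivity) hmod⟩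

/-- Asymptotic squared modulus of the second root pair. -/
theorem stmt_15 (A B C δ : ℝ) (hA : 0 < A) (hB : 0 < B) (hC : 0 < C) (hδ : 0 < δ)
    (u : ℝ → ℝ)
    (hu : (fun z => u z - (-(A * C * B / (2 * (A + B) ^ 2)) * z ^ 2))
      =O[nhdsWithin 0 (Set.Ioi 0)] fun z => z ^ 3) :
    (((fun z => (4 * u z ^ 3 + 3 * A * u z ^ 2 * z + 2 * u z * z * (A + B) + A * C * z ^ 3)
          / (4 * u z + A * z) - C * A / (A + B) * z ^ 2)
        =O[nhdsWithin 0 (Set.Ioi 0)] fun z => z ^ 3)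
      ∧ ((fun z => (1 + u z) ^ 2
            + (4 * u z ^ 3 + 3 * A * u z ^ 2 * z + 2 * u z * z * (A + B) + A * C * z ^ 3)
              / (4 * u z + A * z)
            - (1 + C * A ^ 2 / (A + B) ^ 2 * z ^ 2))
          =O[nhdsWithin 0 (Set.Ioi 0)] fun z => z ^ 3)
      ∧ ∃ δ₄ > 0, ∀ z : ℝ, 0 < z → z < δ₄ →
          1 < (1 + u z) ^ 2
            + (4 * u z ^ 3 + 3 * A * u z ^ 2 * z + 2 * u z * z * (A + B) + A * C * z ^ 3)
              / (4 * u z + A * z)) :=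
  stmt_15_general A B C hA hB hC u hu
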